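/- Let A ∈ W^{2,∞}(ℝ³,ℝ³) and define Φ̃_A as the two-parameter line-integral phase Φ̃_A(X,Z,r,s) := ∫₀¹ [A(ζ⁺_t) + A(ζ⁻_t)]·Z dt - ∫₀¹ [A(ζ⁺_t) - A(ζ⁻_t)]·((r-s)/2) dt with ζ^±_t := X + Z - tZ ± (s + t(r-s))/2. Then |∇_r Φ̃_A(X,Z,r,s) + ¼ ∇_r[(r-s)·DA(X)(r+s)]| ≤ C ‖D²A‖_∞ (|s|² + |r-s|² + |Z|²) for a universal constant C, uniformly in X. -/

import Mathlib

open Real RealInnerProductSpace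

noncomputable section

/-- The phase `Φ̃_A(X,Z,r,s)`. -/
def PhiTilde (A : EuclideanSpace ℝ (Fin 3) → EuclideanSpace ℝ (Fin 3))
    (X Z r s : EuclideanSpace ℝ (Fin 3)) : ℝ :=
  (∫ t in (0:ℝ)..1,
      ⟪A (X + Z - t • Z + (2:ℝ)⁻¹ • (s + t • (r - s)))
        + A (X + Z - t • Z - (2:ℝ)⁻¹ • (s + t • (r - s))), Z⟫)
  - ∫ t in (0:ℝ)..1,
      ⟪A (X + Z - t • Z + (2:ℝ)⁻¹ • (s + t • (r - s)))
        - A (X + Z - t • Z - (2:ℝ)⁻¹ • (s + t • (r - s))), (2:ℝ)⁻¹ • (r - s)⟫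

/-- The line-integral phase `Φ_{2A}(x,y) = ∫₀¹ 2A(y + t(x-y))·(x-y) dt`. -/
def PhiTwo (A : EuclideanSpace ℝ (Fin 3) → EuclideanSpace ℝ (Fin 3))
    (x y : EuclideanSpace ℝ (Fin 3)) : ℝ :=
  ∫ t in (0:ℝ)..1, ⟪(2:ℝ) • A (y + t • (x - y)), x - y⟫

/-! Φ̃_A is linear in `A`. Write `A = B + (A X + DA(X)(· - X))` with `B` the first-order Taylor
remainder of `A` at `X`: for the affine part, `A(ζ⁺_t) + A(ζ⁻_t)` does not depend on `r` and
`A(ζ⁺_t) - A(ζ⁻_t) = DA(X)(s + t(r - s))`, so its phase is `-¼ (r-s)·DA(X)(r+s)` up to a constant.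
Hence the quantity to bound is `∇_r Φ̃_B`. Differentiating under the integral, this is controlled
by `|B(ζ)| ≤ ‖D²A‖_∞ |ζ - X|²` and `|DB(ζ)| ≤ ‖D²A‖_∞ |ζ - X|` at the points `ζ = ζ^±_t`, which
lie within `|Z| + |s| + |r - s|` of `X`. -/

section Taylor

variable {E F : Type*} [NormedAddCommGroup E] [NormedSpace ℝ E]
  [NormedAddCommGroup F] [NormedSpace ℝ F] {A : E → F} {M : ℝ}

def firstOrderRemainder (A : E → F) (x y : E) : F := A y - A x - fderiv ℝ A x (y - x)

theorem hasFDerivAt_firstOrderRemainder (hA : Differentiable ℝ A) (x y : E) :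
    HasFDerivAt (firstOrderRemainder A x) (fderiv ℝ A y - fderiv ℝ A x) y := by
  have h := ((hA y).hasFDerivAt.sub_const (A x)).sub
    ((fderiv ℝ A x).hasFDerivAt.comp y ((hasFDerivAt_id y).sub_const x))
  rwa [ContinuousLinearMap.comp_id] at h

theorem contDiff_firstOrderRemainder {n : WithTop ℕ∞} (hA : ContDiff ℝ n A) (x : E) :
    ContDiff ℝ n (firstOrderRemainder A x) := by
  unfold firstOrderRemainder; fun_prop

theorem norm_fderiv_sub_fderiv_le (hA : ContDiff ℝ 2 A)
    (hM : ∀ x, ‖fderiv ℝ (fderiv ℝ A) x‖ ≤ M) (x y : E) :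
    ‖fderiv ℝ A y - fderiv ℝ A x‖ ≤ M * ‖y - x‖ :=
  Convex.norm_image_sub_le_of_norm_fderiv_le
    (fun z _ => ((hA.fderiv_right (m := 1) le_rfl).differentiable one_ne_zero) z)
    (fun z _ => hM z) convex_univ trivial trivial

theorem norm_firstOrderRemainder_le (hA : ContDiff ℝ 2 A)
    (hM : ∀ x, ‖fderiv ℝ (fderiv ℝ A) x‖ ≤ M) (x y : E) :
    ‖firstOrderRemainder A x y‖ ≤ M * ‖y - x‖ ^ 2 := by
  have hM₀ : 0 ≤ M := (norm_nonneg (fderiv ℝ (fderiv ℝ A) x)).trans (hM x)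
  rw [sq, ← mul_assoc]
  exact (convex_closedBall x ‖y - x‖).norm_image_sub_le_of_norm_fderiv_le'
    (fun z _ => (hA.differentiable two_ne_zero) z)
    (fun z hz => (norm_fderiv_sub_fderiv_le hA hM x z).trans
      (mul_le_mul_of_nonneg_left (mem_closedBall_iff_norm.1 hz) hM₀))
    (Metric.mem_closedBall_self (norm_nonneg _)) (mem_closedBall_iff_norm.2 le_rfl)

end Taylor

section Zeta

variable {E : Type*} [NormedAddCommGroup E] [NormedSpace ℝ E]

def zetaPlus (X Z r s : E) (t : ℝ) : E := X + Z - t • Z + (2:ℝ)⁻¹ • (s + t • (r - s))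

def zetaMinus (X Z r s : E) (t : ℝ) : E := X + Z - t • Z - (2:ℝ)⁻¹ • (s + t • (r - s))

theorem zetaMinus_eq_zetaPlus_neg (X Z r s : E) (t : ℝ) :
    zetaMinus X Z r s t = zetaPlus X Z (-r) (-s) t := by
  simp only [zetaMinus, zetaPlus]; module

theorem norm_zetaPlus_sub_le {t : ℝ} (ht : t ∈ Set.Icc (0:ℝ) 1) (X Z r s : E) :
    ‖zetaPlus X Z r s t - X‖ ≤ ‖Z‖ + ‖s‖ + ‖r - s‖ := by
  obtain ⟨h0, h1⟩ := ht
  have hζ : zetaPlus X Z r s t - X = (1 - t) • Z + (2:ℝ)⁻¹ • (s + t • (r - s)) := by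
    simp only [zetaPlus, sub_smul, one_smul]; abel
  have hw : ‖s + t • (r - s)‖ ≤ ‖s‖ + t * ‖r - s‖ := by
    refine (norm_add_le _ _).trans ?_
    rw [norm_smul, Real.norm_of_nonneg h0]
  rw [hζ]
  refine (norm_add_le _ _).trans ?_
  rw [norm_smul, norm_smul, Real.norm_of_nonneg (by linarith), Real.norm_of_nonneg (by norm_num)]
  nlinarith [norm_nonneg Z, norm_nonneg s, norm_nonneg (r - s)]

theorem norm_zetaMinus_sub_le {t : ℝ} (ht : t ∈ Set.Icc (0:ℝ) 1) (X Z r s : E) :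
    ‖zetaMinus X Z r s t - X‖ ≤ ‖Z‖ + ‖s‖ + ‖r - s‖ := by
  have h := norm_zetaPlus_sub_le ht X Z (-r) (-s)
  rwa [norm_neg, neg_sub_neg, norm_sub_rev s r, ← zetaMinus_eq_zetaPlus_neg] at h

end Zeta

section PhaseIntegrand

variable {E : Type*} [NormedAddCommGroup E] [InnerProductSpace ℝ E]

def phaseIntegrand (A : E → E) (X Z r s : E) (t : ℝ) : ℝ :=
  ⟪A (zetaPlus X Z r s t) + A (zetaMinus X Z r s t), Z⟫
    - ⟪A (zetaPlus X Z r s t) - A (zetaMinus X Z r s t), (2:ℝ)⁻¹ • (r - s)⟫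

-- `∂ζ^±_t/∂r = ±(t/2)·id`
def phaseIntegrandDeriv (A : E → E) (X Z r s : E) (t : ℝ) : E →L[ℝ] ℝ :=
  (t / 2) • (innerSL ℝ Z).comp (fderiv ℝ A (zetaPlus X Z r s t) - fderiv ℝ A (zetaMinus X Z r s t))
    - (t / 2) • (innerSL ℝ ((2:ℝ)⁻¹ • (r - s))).comp
        (fderiv ℝ A (zetaPlus X Z r s t) + fderiv ℝ A (zetaMinus X Z r s t))
    - (2:ℝ)⁻¹ • innerSL ℝ (A (zetaPlus X Z r s t) - A (zetaMinus X Z r s t))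

theorem continuous_phaseIntegrand {A : E → E} (hA : Continuous A) (X Z r s : E) :
    Continuous (phaseIntegrand A X Z r s) := by
  unfold phaseIntegrand zetaPlus zetaMinus; fun_prop

theorem continuous_phaseIntegrandDeriv {A : E → E} (hA : ContDiff ℝ 1 A) (X Z r s : E) :
    Continuous (phaseIntegrandDeriv A X Z r s) := by
  have := hA.continuous
  have := hA.continuous_fderiv one_ne_zero
  unfold phaseIntegrandDeriv zetaPlus zetaMinus; fun_prop

theorem phaseIntegrand_add (A B : E → E) (X Z r s : E) (t : ℝ) :
    phaseIntegrand (A + B) X Z r s t = phaseIntegrand A X Z r s t + phaseIntegrand B X Z r s t := by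
  simp only [phaseIntegrand, Pi.add_apply, inner_add_left, inner_sub_left]
  ring

theorem phaseIntegrand_affine (c : E) (L : E →L[ℝ] E) (X Z r s : E) (t : ℝ) :
    phaseIntegrand (fun y => c + L y) X Z r s t
      = ⟪(2:ℝ) • c + (2:ℝ) • L (X + Z - t • Z), Z⟫
        - (2⁻¹ * ⟪L s, r - s⟫ + t * (2⁻¹ * ⟪L (r - s), r - s⟫)) := by
  have hsum : zetaPlus X Z r s t + zetaMinus X Z r s t = (2:ℝ) • (X + Z - t • Z) := by
    simp only [zetaPlus, zetaMinus]; module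
  have hdiff : zetaPlus X Z r s t - zetaMinus X Z r s t = s + t • (r - s) := by
    simp only [zetaPlus, zetaMinus]; module
  have hsum' : c + L (zetaPlus X Z r s t) + (c + L (zetaMinus X Z r s t))
      = (2:ℝ) • c + (2:ℝ) • L (X + Z - t • Z) := by
    rw [← map_smul, ← hsum, map_add]; module
  have hdiff' : c + L (zetaPlus X Z r s t) - (c + L (zetaMinus X Z r s t))
      = L s + t • L (r - s) := by
    rw [← map_smul, ← map_add, ← hdiff, map_sub]; abel
  rw [phaseIntegrand, hsum', hdiff']
  simp only [inner_add_left, real_inner_smul_left, real_inner_smul_right]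
  ring


theorem hasFDerivAt_phaseIntegrand {A : E → E} (hA : Differentiable ℝ A) (X Z r s : E) (t : ℝ) :
    HasFDerivAt (fun ρ => phaseIntegrand A X Z ρ s t) (phaseIntegrandDeriv A X Z r s t) r := by
  have hw : HasFDerivAt (fun ρ : E => (2:ℝ)⁻¹ • (s + t • (ρ - s)))
      ((2:ℝ)⁻¹ • t • ContinuousLinearMap.id ℝ E) r :=
    ((((hasFDerivAt_id r).sub_const s).const_smul t).const_add s).const_smul (2:ℝ)⁻¹
  have hp := (hA _).hasFDerivAt.comp r (hw.const_add (X + Z - t • Z))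
  have hm := (hA _).hasFDerivAt.comp r (hw.const_sub (X + Z - t • Z))
  have h := ((hp.add hm).inner ℝ (hasFDerivAt_const Z r)).sub
    ((hp.sub hm).inner ℝ (((hasFDerivAt_id r).sub_const s).const_smul (2:ℝ)⁻¹))
  refine h.congr_fderiv ?_
  ext v
  simp only [phaseIntegrandDeriv, fderivInnerCLM_apply, ContinuousLinearMap.comp_apply,
    ContinuousLinearMap.prod_apply, add_apply, sub_apply, smul_apply, neg_apply, zero_apply,
    ContinuousLinearMap.coe_id', id_eq, Pi.add_apply, Pi.sub_apply, Pi.smul_apply,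
    Function.comp_apply, inner_zero_right, inner_add_left, inner_sub_left, inner_add_right,
    inner_sub_right, inner_neg_left, real_inner_smul_left, real_inner_smul_right,
    innerSL_apply_apply, map_smul, map_neg, smul_eq_mul, zetaPlus, zetaMinus]
  simp only [real_inner_comm Z, real_inner_comm r, real_inner_comm s]
  ring

theorem norm_phaseIntegrandDeriv_le {A : E → E} {X Z r s : E} {t α β : ℝ} (ht : |t| ≤ 1)
    (hAp : ‖A (zetaPlus X Z r s t)‖ ≤ α) (hAm : ‖A (zetaMinus X Z r s t)‖ ≤ α)
    (hDp : ‖fderiv ℝ A (zetaPlus X Z r s t)‖ ≤ β) (hDm : ‖fderiv ℝ A (zetaMinus X Z r s t)‖ ≤ β) :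
    ‖phaseIntegrandDeriv A X Z r s t‖ ≤ β * (‖Z‖ + ‖r - s‖) + α := by
  set P := fderiv ℝ A (zetaPlus X Z r s t)
  set Q := fderiv ℝ A (zetaMinus X Z r s t)
  have ht2 : ‖t / 2‖ ≤ 2⁻¹ := by
    rw [norm_div, Real.norm_eq_abs, Real.norm_two]; linarith
  have hβ : 0 ≤ β := (norm_nonneg _).trans hDp
  have hZ : ‖(innerSL ℝ Z).comp (P - Q)‖ ≤ ‖Z‖ * (β + β) :=
    ((innerSL ℝ Z).opNorm_comp_le _).trans <| by
      rw [innerSL_apply_norm]; gcongr; exact (norm_sub_le _ _).trans (add_le_add hDp hDm)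
  have hrs : ‖(innerSL ℝ ((2:ℝ)⁻¹ • (r - s))).comp (P + Q)‖ ≤ 2⁻¹ * ‖r - s‖ * (β + β) :=
    ((innerSL ℝ _).opNorm_comp_le _).trans <| by
      rw [innerSL_apply_norm, norm_smul, Real.norm_of_nonneg (by norm_num)]
      gcongr; exact (norm_add_le _ _).trans (add_le_add hDp hDm)
  have hA : ‖A (zetaPlus X Z r s t) - A (zetaMinus X Z r s t)‖ ≤ α + α :=
    (norm_sub_le _ _).trans (add_le_add hAp hAm)
  calc ‖phaseIntegrandDeriv A X Z r s t‖
      ≤ ‖t / 2‖ * ‖(innerSL ℝ Z).comp (P - Q)‖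
        + ‖t / 2‖ * ‖(innerSL ℝ ((2:ℝ)⁻¹ • (r - s))).comp (P + Q)‖
        + ‖(2:ℝ)⁻¹‖ * ‖innerSL ℝ (A (zetaPlus X Z r s t) - A (zetaMinus X Z r s t))‖ := by
        simp only [phaseIntegrandDeriv, ← norm_smul]
        exact (norm_sub_le _ _).trans (add_le_add (norm_sub_le _ _) le_rfl)
    _ ≤ 2⁻¹ * (‖Z‖ * (β + β)) + 2⁻¹ * (2⁻¹ * ‖r - s‖ * (β + β)) + 2⁻¹ * (α + α) := by
        rw [innerSL_apply_norm, Real.norm_of_nonneg (by norm_num : (0:ℝ) ≤ 2⁻¹)]; gcongr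
    _ ≤ β * (‖Z‖ + ‖r - s‖) + α := by nlinarith [mul_nonneg hβ (norm_nonneg (r - s))]


end PhaseIntegrand

local notation "ℝ³" => EuclideanSpace ℝ (Fin 3)

theorem PhiTilde_eq_integral {A : ℝ³ → ℝ³} (hA : Continuous A) (X Z r s : ℝ³) :
    PhiTilde A X Z r s = ∫ t in (0:ℝ)..1, phaseIntegrand A X Z r s t := by
  unfold phaseIntegrand
  rw [intervalIntegral.integral_sub
    (Continuous.intervalIntegrable (by unfold zetaPlus zetaMinus; fun_prop) _ _)
    (Continuous.intervalIntegrable (by unfold zetaPlus zetaMinus; fun_prop) _ _)]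
  rfl

theorem PhiTilde_add {A B : ℝ³ → ℝ³} (hA : Continuous A) (hB : Continuous B) (X Z r s : ℝ³) :
    PhiTilde (A + B) X Z r s = PhiTilde A X Z r s + PhiTilde B X Z r s := by
  simp only [PhiTilde_eq_integral (hA.add hB), PhiTilde_eq_integral hA, PhiTilde_eq_integral hB,
    phaseIntegrand_add]
  exact intervalIntegral.integral_add
    ((continuous_phaseIntegrand hA X Z r s).intervalIntegrable _ _)
    ((continuous_phaseIntegrand hB X Z r s).intervalIntegrable _ _)

theorem exists_PhiTilde_affine_eq (c : ℝ³) (L : ℝ³ →L[ℝ] ℝ³) (X Z s : ℝ³) :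
    ∃ κ : ℝ, ∀ ρ, PhiTilde (fun y => c + L y) X Z ρ s = κ - 4⁻¹ * ⟪ρ - s, L (ρ + s)⟫ := by
  refine ⟨∫ t in (0:ℝ)..1, ⟪(2:ℝ) • c + (2:ℝ) • L (X + Z - t • Z), Z⟫, fun ρ => ?_⟩
  simp only [PhiTilde_eq_integral (by fun_prop : Continuous fun y => c + L y),
    phaseIntegrand_affine]
  rw [intervalIntegral.integral_sub (Continuous.intervalIntegrable (by fun_prop) _ _)
    (Continuous.intervalIntegrable (by fun_prop) _ _)]
  have hlin : ∀ α β : ℝ, ∫ t in (0:ℝ)..1, (α + t * β) = α + β / 2 := fun α β => by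
    simp [intervalIntegral.integral_add, intervalIntegral.integral_mul_const, integral_id]; ring
  rw [hlin, map_add, map_sub, inner_add_right, inner_sub_left]
  simp only [real_inner_comm (ρ - s)]
  ring

theorem hasFDerivAt_PhiTilde {A : ℝ³ → ℝ³} (hA : ContDiff ℝ 1 A) (X Z r s : ℝ³) :
    HasFDerivAt (fun ρ => PhiTilde A X Z ρ s)
      (∫ t in (0:ℝ)..1, phaseIntegrandDeriv A X Z r s t) r := by
  set K := Metric.closedBall X (‖Z‖ + ‖s‖ + (‖r - s‖ + 1))
  have hK : IsCompact K := isCompact_closedBall _ _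
  obtain ⟨α, hα⟩ := hK.exists_bound_of_continuousOn hA.continuous.continuousOn
  obtain ⟨β, hβ⟩ := hK.exists_bound_of_continuousOn (hA.continuous_fderiv one_ne_zero).continuousOn
  have hβ₀ : 0 ≤ β := (norm_nonneg _).trans (hβ X (Metric.mem_closedBall_self (by positivity)))
  have hcont := fun ρ => continuous_phaseIntegrand hA.continuous X Z ρ s
  rw [funext fun ρ => PhiTilde_eq_integral hA.continuous X Z ρ s]
  refine intervalIntegral.hasFDerivAt_integral_of_dominated_of_fderiv_le
    (bound := fun _ => β * (‖Z‖ + (‖r - s‖ + 1)) + α) (Metric.ball_mem_nhds r one_pos)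
    (Filter.Eventually.of_forall fun ρ => (hcont ρ).aestronglyMeasurable)
    ((hcont r).intervalIntegrable 0 1)
    (continuous_phaseIntegrandDeriv hA X Z r s).aestronglyMeasurable
    (Filter.Eventually.of_forall fun t ht ρ hρ => ?_) intervalIntegrable_const
    (Filter.Eventually.of_forall fun t _ ρ _ =>
      hasFDerivAt_phaseIntegrand (hA.differentiable one_ne_zero) X Z ρ s t)
  rw [Set.uIoc_of_le zero_le_one] at ht
  have hρs : ‖ρ - s‖ ≤ ‖r - s‖ + 1 := by
    have := norm_sub_le_norm_sub_add_norm_sub ρ r s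
    linarith [mem_ball_iff_norm.1 hρ]
  have hp : zetaPlus X Z ρ s t ∈ K := mem_closedBall_iff_norm.2 <|
    (norm_zetaPlus_sub_le (Set.Ioc_subset_Icc_self ht) X Z ρ s).trans (by linarith)
  have hm : zetaMinus X Z ρ s t ∈ K := mem_closedBall_iff_norm.2 <|
    (norm_zetaMinus_sub_le (Set.Ioc_subset_Icc_self ht) X Z ρ s).trans (by linarith)
  refine (norm_phaseIntegrandDeriv_le (abs_le.2 ⟨by linarith [ht.1], ht.2⟩)
    (hα _ hp) (hα _ hm) (hβ _ hp) (hβ _ hm)).trans ?_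
  gcongr

theorem fderiv_PhiTilde_add_fderiv_quadratic {A : ℝ³ → ℝ³} (hA : ContDiff ℝ 1 A)
    (X Z r s : ℝ³) :
    fderiv ℝ (fun ρ => PhiTilde A X Z ρ s) r
        + (4:ℝ)⁻¹ • fderiv ℝ (fun ρ => ⟪ρ - s, fderiv ℝ A X (ρ + s)⟫) r
      = fderiv ℝ (fun ρ => PhiTilde (firstOrderRemainder A X) X Z ρ s) r := by
  set L := fderiv ℝ A X
  have hB := contDiff_firstOrderRemainder hA X
  obtain ⟨κ, hκ⟩ := exists_PhiTilde_affine_eq (A X - L X) L X Z s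
  have hsplit : A = firstOrderRemainder A X + fun y => (A X - L X) + L y := by
    funext y; simp only [firstOrderRemainder, Pi.add_apply, map_sub]; abel
  have hΦ : (fun ρ => PhiTilde A X Z ρ s)
      = fun ρ => PhiTilde (firstOrderRemainder A X) X Z ρ s + κ - 4⁻¹ * ⟪ρ - s, L (ρ + s)⟫ := by
    funext ρ
    conv_lhs => rw [hsplit]
    rw [PhiTilde_add hB.continuous (by fun_prop), hκ]
    ring
  have hQ : DifferentiableAt ℝ (fun ρ => ⟪ρ - s, L (ρ + s)⟫) r :=
    DifferentiableAt.inner ℝ (by fun_prop) (by fun_prop)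
  rw [hΦ, fderiv_fun_sub ((hasFDerivAt_PhiTilde hB X Z r s).differentiableAt.add_const κ)
    (hQ.const_mul _), fderiv_add_const, fderiv_const_mul hQ, sub_add_cancel]

theorem norm_fderiv_PhiTilde_firstOrderRemainder_le {A : ℝ³ → ℝ³} (hA : ContDiff ℝ 2 A) {M : ℝ}
    (hM : ∀ x, ‖fderiv ℝ (fderiv ℝ A) x‖ ≤ M) (X Z r s : ℝ³) :
    ‖fderiv ℝ (fun ρ => PhiTilde (firstOrderRemainder A X) X Z ρ s) r‖
      ≤ 6 * M * (‖s‖ ^ 2 + ‖r - s‖ ^ 2 + ‖Z‖ ^ 2) := by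
  set R := ‖Z‖ + ‖s‖ + ‖r - s‖
  have hM₀ : 0 ≤ M := (norm_nonneg (fderiv ℝ (fderiv ℝ A) X)).trans (hM X)
  have hrem : ∀ y, ‖y - X‖ ≤ R →
      ‖firstOrderRemainder A X y‖ ≤ M * R ^ 2 ∧ ‖fderiv ℝ (firstOrderRemainder A X) y‖ ≤ M * R := by
    intro y hy
    refine ⟨(norm_firstOrderRemainder_le hA hM X y).trans (by gcongr), ?_⟩
    rw [(hasFDerivAt_firstOrderRemainder (hA.differentiable two_ne_zero) X y).fderiv]
    exact (norm_fderiv_sub_fderiv_le hA hM X y).trans (by gcongr)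
  rw [(hasFDerivAt_PhiTilde (contDiff_firstOrderRemainder (hA.of_le one_le_two) X) X Z r s).fderiv]
  calc ‖∫ t in (0:ℝ)..1, phaseIntegrandDeriv (firstOrderRemainder A X) X Z r s t‖
      ≤ (M * R * (‖Z‖ + ‖r - s‖) + M * R ^ 2) * |1 - 0| :=
        intervalIntegral.norm_integral_le_of_norm_le_const fun t ht => by
          rw [Set.uIoc_of_le zero_le_one] at ht
          have ht' := Set.Ioc_subset_Icc_self ht
          obtain ⟨hp, hp'⟩ := hrem _ (norm_zetaPlus_sub_le ht' X Z r s)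
          obtain ⟨hm, hm'⟩ := hrem _ (norm_zetaMinus_sub_le ht' X Z r s)
          exact norm_phaseIntegrandDeriv_le (abs_le.2 ⟨by linarith [ht.1], ht.2⟩) hp hm hp' hm'
    _ ≤ 2 * M * R ^ 2 := by
        have : M * R * (‖Z‖ + ‖r - s‖) ≤ M * R * R := by
          gcongr; linarith [norm_nonneg s]
        norm_num; nlinarith
    _ ≤ 6 * M * (‖s‖ ^ 2 + ‖r - s‖ ^ 2 + ‖Z‖ ^ 2) := by
        have : R ^ 2 ≤ 3 * (‖s‖ ^ 2 + ‖r - s‖ ^ 2 + ‖Z‖ ^ 2) := by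
          nlinarith [sq_nonneg (‖Z‖ - ‖s‖), sq_nonneg (‖Z‖ - ‖r - s‖), sq_nonneg (‖s‖ - ‖r - s‖)]
        nlinarith

/-- For `A ∈ W^{2,∞}(ℝ³,ℝ³)`, uniformly in `X`:
`|∇_r Φ̃_A(X,Z,r,s) + ¼ ∇_r[(r-s)·DA(X)(r+s)]| ≤ C ‖D²A‖_∞ (|s|² + |r-s|² + |Z|²)`. -/
theorem stmt_10 :
    ∃ C : ℝ, 0 < C ∧
      ∀ (A : EuclideanSpace ℝ (Fin 3) → EuclideanSpace ℝ (Fin 3)),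
        ContDiff ℝ 2 A →
        ∀ M : ℝ, (∀ x, ‖fderiv ℝ (fderiv ℝ A) x‖ ≤ M) →
        (∃ M₀, ∀ x, ‖A x‖ ≤ M₀) → (∃ M₁, ∀ x, ‖fderiv ℝ A x‖ ≤ M₁) →
        ∀ X Z r s : EuclideanSpace ℝ (Fin 3),
          ‖fderiv ℝ (fun ρ => PhiTilde A X Z ρ s) r
              + (4:ℝ)⁻¹ • fderiv ℝ (fun ρ => ⟪ρ - s, fderiv ℝ A X (ρ + s)⟫) r‖
            ≤ C * M * (‖s‖ ^ 2 + ‖r - s‖ ^ 2 + ‖Z‖ ^ 2) := by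
  refine ⟨6, by norm_num, fun A hA M hM _ _ X Z r s => ?_⟩
  rw [fderiv_PhiTilde_add_fderiv_quadratic (hA.of_le one_le_two)]
  exact norm_fderiv_PhiTilde_firstOrderRemainder_le hA hM X Z r s

end
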